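/- arXiv:1507.01423 — 2 statements merged into one kernel-verified Lean document; each statement's English description precedes it below -/
import Mathlib

section
/- Let (α, C, A, γ) be a Galois connection between complete lattices, let f : C → ℘∧(C) and f♯ : A → ℘∧(A) be S-monotone multivalued functions, and suppose f♯ is a complete approximation of f, i.e., α^s(f(c)) = f♯(α(c)) for every c ∈ C. Then α(lfp(f)) = lfp(f♯), where lfp denotes the least fixed point of a multivalued function (the least element of {x : x ∈ f(x)}). -/
/-!
A multivalued `f : C → ℘∧(C)` that is S-monotone has a monotone "least choice" `c ↦ ⋀ f c`, and
its multivalued fixed points are squeezed by this map: the least element of `{x | x ∈ f x}` is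
the ordinary least fixed point of `c ↦ ⋀ f c`, hence lies below every `c` with `⋀ f c ≤ c`.
Completeness makes `α L` a fixed point of `f♯`, and for any `a ∈ f♯ a` the adjoint `γ a`
satisfies `⋀ f (γ a) ≤ γ a`, so `L ≤ γ a`, i.e. `α L ≤ a`.
-/

/-- Smyth preorder on subsets. -/
def SmythLE {β : Type*} [LE β] (X Y : Set β) : Prop := ∀ y ∈ Y, ∃ x ∈ X, x ≤ y

theorem SmythLE.sInf_le_sInf {β : Type*} [CompleteLattice β] {X Y : Set β}
    (h : SmythLE X Y) : sInf X ≤ sInf Y :=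
  le_sInf fun y hy => (h y hy).elim fun _ ⟨hx, hxy⟩ => (sInf_le hx).trans hxy

section SmythMonotone

variable {C : Type*} [CompleteLattice C] (f : C → Set C)
  (hmono : ∀ x y : C, x ≤ y → SmythLE (f x) (f y))

def smythInf : C →o C :=
  ⟨fun c => sInf (f c), fun x y hxy => (hmono x y hxy).sInf_le_sInf⟩

include hmono

theorem isLeast_lfp_smythInf (hmem : ∀ c, sInf (f c) ∈ f c) :
    IsLeast {x | x ∈ f x} (smythInf f hmono).lfp := by
  refine ⟨?_, fun x hx => (smythInf f hmono).lfp_le (sInf_le hx)⟩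
  have hfix : sInf (f (smythInf f hmono).lfp) = (smythInf f hmono).lfp :=
    (smythInf f hmono).map_lfp
  simpa only [Set.mem_ofPred_eq, hfix] using hmem (smythInf f hmono).lfp

theorem IsLeast.le_of_sInf_le (hmem : ∀ c, sInf (f c) ∈ f c) {L c : C}
    (hL : IsLeast {x | x ∈ f x} L) (hc : sInf (f c) ≤ c) : L ≤ c := by
  rw [hL.unique (isLeast_lfp_smythInf f hmono hmem)]
  exact (smythInf f hmono).lfp_le hc

end SmythMonotone

section CompleteApproximation

variable {C A : Type*} [CompleteLattice C] [CompleteLattice A]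
  {α : C → A} {γ : A → C} (hgc : GaloisConnection α γ)
  {f : C → Set C} {f' : A → Set A} (hcomplete : ∀ c : C, α '' f c = f' (α c))
include hgc hcomplete

theorem sInf_le_of_mem_complete_approximation
    (hmono' : ∀ x y : A, x ≤ y → SmythLE (f' x) (f' y)) {a : A} (ha : a ∈ f' a) :
    sInf (f (γ a)) ≤ γ a := by
  obtain ⟨b, hb, hba⟩ := hmono' (α (γ a)) a (hgc.l_u_le a) a ha
  rw [← hcomplete (γ a)] at hb
  obtain ⟨c, hc, rfl⟩ := hb
  exact hgc.le_u ((hgc.monotone_l (sInf_le hc)).trans hba)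

theorem IsLeast.image_of_complete_approximation
    (hmem : ∀ c, sInf (f c) ∈ f c) (hmono : ∀ x y : C, x ≤ y → SmythLE (f x) (f y))
    (hmono' : ∀ x y : A, x ≤ y → SmythLE (f' x) (f' y))
    {L : C} (hL : IsLeast {x | x ∈ f x} L) : IsLeast {a | a ∈ f' a} (α L) := by
  refine ⟨?_, fun a ha => ?_⟩
  · show α L ∈ f' (α L)
    exact hcomplete L ▸ Set.mem_image_of_mem α hL.1
  · exact hgc.l_le <| hL.le_of_sInf_le f hmono hmem <|
      sInf_le_of_mem_complete_approximation hgc hcomplete hmono' ha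

end CompleteApproximation

/-- complete least fixed point approximation: if `(α, C, A, γ)` is a
Galois connection between complete lattices, `f : C → ℘∧(C)` and `f♯ : A → ℘∧(A)`
are S-monotone, and `f♯` is a complete approximation of `f`, i.e.
`α^s(f c) = f♯ (α c)` for all `c`, then `α (lfp f) = lfp f♯`. -/
theorem complete_lfp_approximation {C A : Type*}
    [CompleteLattice C] [CompleteLattice A]
    (α : C → A) (γ : A → C) (hgc : GaloisConnection α γ)
    (f : C → Set C) (hf₁ : ∀ c, sInf (f c) ∈ f c)
    (hf₂ : ∀ x y : C, x ≤ y → SmythLE (f x) (f y))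
    (f' : A → Set A) (hf'₁ : ∀ a, sInf (f' a) ∈ f' a)
    (hf'₂ : ∀ x y : A, x ≤ y → SmythLE (f' x) (f' y))
    (hcomplete : ∀ c : C, α '' f c = f' (α c)) :
    (∃ L, IsLeast {x | x ∈ f x} L) ∧ (∃ L', IsLeast {a | a ∈ f' a} L') ∧
    ∀ L L', IsLeast {x | x ∈ f x} L → IsLeast {a | a ∈ f' a} L' → α L = L' :=
  ⟨⟨_, isLeast_lfp_smythInf f hf₂ hf₁⟩, ⟨_, isLeast_lfp_smythInf f' hf'₂ hf'₁⟩,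
    fun _ _ hL hL' => (hL.image_of_complete_approximation hgc hcomplete hf₁ hf₂ hf'₂).unique hL'⟩
end

section
/- Let (α_i, S_i, A_i, γ_i), i = 1,…,n, be principal filter Galois connections between complete lattices (i.e., γ_i(A_i) = {c ∈ S_i : γ_i(⊥_{A_i}) ≤ c}) which are finitely disjunctive Galois insertions, let (α, S, A, γ) be their componentwise product with S = ∏ S_i and A = ∏ A_i, let Γ = ⟨S_i, u_i⟩_{i=1}^n be a supermodular game whose best response correspondence B takes values in nonempty subcomplete sublattices of S, and let Γ^G = ⟨A_i, u_i^G⟩_{i=1}^n be the abstract game with u_i^G(a) = u_i(γ(a)) whose best response correspondence B^G takes values in nonempty subcomplete sublattices of A. Then Eq(Γ) ⪯_EM γ^s(Eq(Γ^G)). -/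
/-- Hoare preorder on subsets. -/
def HoareLE {β : Type*} [LE β] (X Y : Set β) : Prop := ∀ x ∈ X, ∃ y ∈ Y, x ≤ y

/-- Egli-Milner preorder on subsets. -/
def EgliMilnerLE {β : Type*} [LE β] (X Y : Set β) : Prop := SmythLE X Y ∧ HoareLE X Y

/-- The best response correspondence of the game with strategy spaces `S j` and
utility functions `u i : (∀ j, S j) → ℝ^{N i}`. -/
def bestResponse {n : ℕ} {S : Fin n → Type*} [∀ j, CompleteLattice (S j)]
    {N : Fin n → ℕ} (u : ∀ i, (∀ j, S j) → (Fin (N i) → ℝ))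
    (s : ∀ j, S j) : Set (∀ j, S j) :=
  {t | ∀ i, ∀ x : S i, u i (Function.update s i x) ≤ u i (Function.update s i (t i))}

/-- The pure strategy Nash equilibria: the fixed points of the best response. -/
def nashEq {n : ℕ} {S : Fin n → Type*} [∀ j, CompleteLattice (S j)]
    {N : Fin n → ℕ} (u : ∀ i, (∀ j, S j) → (Fin (N i) → ℝ)) : Set (∀ j, S j) :=
  {s | s ∈ bestResponse u s}

open Function

section Game

variable {n : ℕ} {S : Fin n → Type*} [∀ j, CompleteLattice (S j)]
  {N : Fin n → ℕ} {u : ∀ i, (∀ j, S j) → (Fin (N i) → ℝ)}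

def IsSupermodularUtility (u : ∀ i, (∀ j, S j) → (Fin (N i) → ℝ)) : Prop :=
  ∀ i, ∀ s : ∀ j, S j, ∀ x y : S i,
    u i (update s i x) + u i (update s i y) ≤ u i (update s i (x ⊔ y)) + u i (update s i (x ⊓ y))

def HasIncreasingDifferences (u : ∀ i, (∀ j, S j) → (Fin (N i) → ℝ)) : Prop :=
  ∀ i, ∀ x x' : S i, x ≤ x' → ∀ s t : ∀ j, S j, s ≤ t →
    u i (update s i x') - u i (update s i x) ≤ u i (update t i x') - u i (update t i x)

def IsBestResponseBelow (u : ∀ i, (∀ j, S j) → (Fin (N i) → ℝ)) (s t : ∀ j, S j) : Prop :=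
  ∀ i, ∀ c ≤ t i, u i (update s i c) ≤ u i (update s i (t i))

def IsBestResponseAbove (u : ∀ i, (∀ j, S j) → (Fin (N i) → ℝ)) (s t : ∀ j, S j) : Prop :=
  ∀ i, ∀ c, t i ≤ c → u i (update s i c) ≤ u i (update s i (t i))

theorem isBestResponseBelow_of_mem_bestResponse {s t : ∀ j, S j}
    (ht : t ∈ bestResponse u s) : IsBestResponseBelow u s t :=
  fun i c _ => ht i c

theorem isBestResponseAbove_of_mem_bestResponse {s t : ∀ j, S j}
    (ht : t ∈ bestResponse u s) : IsBestResponseAbove u s t :=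
  fun i c _ => ht i c

theorem utility_le_sup_of_inf_le (hsm : IsSupermodularUtility u)
    (hid : HasIncreasingDifferences u) {s s' : ∀ j, S j} (hs : s ≤ s') {i : Fin n} {x y : S i}
    (h : u i (update s i (x ⊓ y)) ≤ u i (update s i x)) :
    u i (update s' i y) ≤ u i (update s' i (x ⊔ y)) := by
  have hinf : u i (update s' i (x ⊓ y)) ≤ u i (update s' i x) :=
    sub_nonneg.1 ((sub_nonneg.2 h).trans (hid i _ _ inf_le_left s s' hs))
  have := (hsm i s' x y).trans (add_le_add_right hinf _)
  rw [add_comm (u i (update s' i x))] at this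
  exact le_of_add_le_add_right this

theorem utility_le_inf_of_sup_le (hsm : IsSupermodularUtility u)
    (hid : HasIncreasingDifferences u) {s s' : ∀ j, S j} (hs : s ≤ s') {i : Fin n} {x y : S i}
    (h : u i (update s' i (x ⊔ y)) ≤ u i (update s' i y)) :
    u i (update s i x) ≤ u i (update s i (x ⊓ y)) := by
  have hsup : u i (update s i (x ⊔ y)) ≤ u i (update s i y) :=
    sub_nonpos.1 ((hid i _ _ le_sup_right s s' hs).trans (sub_nonpos.2 h))
  have := (hsm i s x y).trans (add_le_add_left hsup _)
  rw [add_comm (u i (update s i y))] at this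
  exact le_of_add_le_add_right this

theorem sup_mem_bestResponse (hsm : IsSupermodularUtility u) (hid : HasIncreasingDifferences u)
    {s s' z z' : ∀ j, S j} (hs : s ≤ s') (hz : IsBestResponseBelow u s z)
    (hz' : z' ∈ bestResponse u s') : z ⊔ z' ∈ bestResponse u s' :=
  fun i c => (hz' i c).trans (utility_le_sup_of_inf_le hsm hid hs (hz i _ inf_le_left))

theorem inf_mem_bestResponse (hsm : IsSupermodularUtility u) (hid : HasIncreasingDifferences u)
    {s s' z z' : ∀ j, S j} (hs : s ≤ s') (hz : z ∈ bestResponse u s)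
    (hz' : IsBestResponseAbove u s' z') : z ⊓ z' ∈ bestResponse u s :=
  fun i c => (hz i c).trans (utility_le_inf_of_sup_le hsm hid hs (hz' i _ le_sup_right))

theorem monotone_sSup_bestResponse (hsm : IsSupermodularUtility u)
    (hid : HasIncreasingDifferences u) (hsup : ∀ s, sSup (bestResponse u s) ∈ bestResponse u s) :
    Monotone fun s => sSup (bestResponse u s) := fun s s' hs =>
  le_sup_left.trans <| le_sSup <|
    sup_mem_bestResponse hsm hid hs (isBestResponseBelow_of_mem_bestResponse (hsup s)) (hsup s')

theorem monotone_sInf_bestResponse (hsm : IsSupermodularUtility u)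
    (hid : HasIncreasingDifferences u) (hinf : ∀ s, sInf (bestResponse u s) ∈ bestResponse u s) :
    Monotone fun s => sInf (bestResponse u s) := fun s s' hs =>
  (sInf_le <| inf_mem_bestResponse hsm hid hs (hinf s)
    (isBestResponseAbove_of_mem_bestResponse (hinf s'))).trans inf_le_right

theorem exists_nashEq_le (hsm : IsSupermodularUtility u) (hid : HasIncreasingDifferences u)
    (hsup : ∀ s, sSup (bestResponse u s) ∈ bestResponse u s) {y : ∀ j, S j}
    (hy : IsBestResponseAbove u y y) : ∃ x ∈ nashEq u, x ≤ y := by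
  let g : (∀ j, S j) →o (∀ j, S j) :=
    ⟨fun s => sSup (bestResponse u s) ⊓ y,
      fun _ _ hs => inf_le_inf_right y (monotone_sSup_bestResponse hsm hid hsup hs)⟩
  have hfix : g g.lfp = g.lfp := g.map_lfp
  have hle : g.lfp ≤ y := hfix ▸ inf_le_right
  have hmem : g g.lfp ∈ bestResponse u g.lfp := inf_mem_bestResponse hsm hid hle (hsup _) hy
  exact ⟨g.lfp, by rwa [hfix] at hmem, hle⟩

theorem exists_le_nashEq (hsm : IsSupermodularUtility u) (hid : HasIncreasingDifferences u)
    (hinf : ∀ s, sInf (bestResponse u s) ∈ bestResponse u s) {x : ∀ j, S j}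
    (hx : IsBestResponseBelow u x x) : ∃ b ∈ nashEq u, x ≤ b := by
  let g : (∀ j, S j) →o (∀ j, S j) :=
    ⟨fun s => x ⊔ sInf (bestResponse u s),
      fun _ _ hs => sup_le_sup_left (monotone_sInf_bestResponse hsm hid hinf hs) x⟩
  have hfix : g g.lfp = g.lfp := g.map_lfp
  have hle : x ≤ g.lfp := hfix ▸ le_sup_left
  have hmem : g g.lfp ∈ bestResponse u g.lfp := sup_mem_bestResponse hsm hid hle hx (hinf _)
  exact ⟨g.lfp, by rwa [hfix] at hmem, hle⟩

end Game

theorem GaloisConnection.u_l_eq_sup_u_bot {L M : Type*} [CompleteLattice L] [CompleteLattice M]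
    {l : L → M} {u : M → L} (gc : GaloisConnection l u) (hu : Set.range u = {c | u ⊥ ≤ c})
    (c : L) : u (l c) = c ⊔ u ⊥ := by
  obtain ⟨a, ha⟩ : c ⊔ u ⊥ ∈ Set.range u := hu ▸ le_sup_right
  refine le_antisymm ?_ (sup_le (gc.le_u_l c) (gc.monotone_u bot_le))
  exact ha ▸ gc.monotone_u (gc.l_le (ha ▸ le_sup_left))

section Abstraction

variable {n : ℕ} {S A : Fin n → Type*} [∀ j, CompleteLattice (S j)] [∀ j, CompleteLattice (A j)]
  {N : Fin n → ℕ} {u : ∀ i, (∀ j, S j) → (Fin (N i) → ℝ)} {γ : ∀ j, A j → S j}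

theorem IsSupermodularUtility.comp_map (hsm : IsSupermodularUtility u)
    (hsup : ∀ j, ∀ x y : A j, γ j (x ⊔ y) = γ j x ⊔ γ j y)
    (hinf : ∀ j, ∀ x y : A j, γ j (x ⊓ y) = γ j x ⊓ γ j y) :
    IsSupermodularUtility fun i a => u i (Pi.map γ a) := by
  intro i a x y
  simp only [Pi.map_update, hsup, hinf]
  exact hsm i _ _ _

theorem HasIncreasingDifferences.comp_map (hid : HasIncreasingDifferences u)
    (hγ : ∀ j, Monotone (γ j)) : HasIncreasingDifferences fun i a => u i (Pi.map γ a) := by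
  intro i x x' hx a a' ha
  simp only [Pi.map_update]
  exact hid i _ _ (hγ i hx) _ _ fun j => hγ j (ha j)

theorem isBestResponseAbove_map_of_mem_nashEq (hγ : ∀ j, Monotone (γ j))
    (hpf : ∀ j, Set.range (γ j) = {c : S j | γ j ⊥ ≤ c}) {b : ∀ j, A j}
    (hb : b ∈ nashEq fun i a => u i (Pi.map γ a)) :
    IsBestResponseAbove u (Pi.map γ b) (Pi.map γ b) := by
  intro i c hc
  obtain ⟨a, rfl⟩ : c ∈ Set.range (γ i) := (hpf i) ▸ (hγ i bot_le).trans hc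
  simpa only [Pi.map_update, Pi.map_apply] using hb i a

theorem isBestResponseBelow_map_of_mem_nashEq {α : ∀ j, S j → A j}
    (hgc : ∀ j, GaloisConnection (α j) (γ j)) (hpf : ∀ j, Set.range (γ j) = {c : S j | γ j ⊥ ≤ c})
    (hsm : IsSupermodularUtility u) (hid : HasIncreasingDifferences u) {x : ∀ j, S j}
    (hx : x ∈ nashEq u) :
    IsBestResponseBelow (fun i a => u i (Pi.map γ a)) (Pi.map α x) (Pi.map α x) := by
  intro i c hc
  have hx_le : x ≤ Pi.map γ (Pi.map α x) := fun j => (hgc j).le_u_l (x j)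
  have hγα : γ i (α i (x i)) = x i ⊔ γ i ⊥ := (hgc i).u_l_eq_sup_u_bot (hpf i) (x i)
  have hsup : x i ⊔ γ i c = γ i (α i (x i)) := by
    rw [hγα]
    exact le_antisymm (sup_le le_sup_left (hγα ▸ (hgc i).monotone_u hc))
      (sup_le_sup_left ((hgc i).monotone_u bot_le) _)
  simp only [Pi.map_update]
  exact hsup ▸ utility_le_sup_of_inf_le hsm hid hx_le (hx i _)

end Abstraction

theorem principal_filter_abstract_game_correctness_general {n : ℕ} {S A : Fin n → Type*}
    [∀ j, CompleteLattice (S j)] [∀ j, CompleteLattice (A j)]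
    (α : ∀ j, S j → A j) (γ : ∀ j, A j → S j)
    (hgc : ∀ j, GaloisConnection (α j) (γ j))
    (hdisj : ∀ j, ∀ x y : A j, γ j (x ⊔ y) = γ j x ⊔ γ j y)
    (hpf : ∀ j, Set.range (γ j) = {c : S j | γ j ⊥ ≤ c})
    {N : Fin n → ℕ} (u : ∀ i, (∀ j, S j) → (Fin (N i) → ℝ))
    (hsm : ∀ i, ∀ s : ∀ j, S j, ∀ x y : S i,
      u i (Function.update s i x) + u i (Function.update s i y) ≤
        u i (Function.update s i (x ⊔ y)) + u i (Function.update s i (x ⊓ y)))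
    (hid : ∀ i, ∀ x x' : S i, x ≤ x' → ∀ s t : ∀ j, S j, s ≤ t →
      u i (Function.update s i x') - u i (Function.update s i x) ≤
        u i (Function.update t i x') - u i (Function.update t i x))
    (hB : ∀ s : ∀ j, S j, (bestResponse u s).Nonempty ∧
      ∀ Z ⊆ bestResponse u s, Z.Nonempty →
        sInf Z ∈ bestResponse u s ∧ sSup Z ∈ bestResponse u s)
    (hBG : ∀ a : ∀ j, A j,
      (bestResponse (fun i a => u i (fun j => γ j (a j))) a).Nonempty ∧
      ∀ Z ⊆ bestResponse (fun i a => u i (fun j => γ j (a j))) a, Z.Nonempty →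
        sInf Z ∈ bestResponse (fun i a => u i (fun j => γ j (a j))) a ∧
        sSup Z ∈ bestResponse (fun i a => u i (fun j => γ j (a j))) a) :
    EgliMilnerLE (nashEq u)
      ((fun b : ∀ j, A j => fun j => γ j (b j)) ''
        nashEq (fun i a => u i (fun j => γ j (a j)))) := by
  have hγ : ∀ j, Monotone (γ j) := fun j => (hgc j).monotone_u
  refine ⟨?_, fun x hx => ?_⟩
  · rintro _ ⟨b, hb, rfl⟩
    exact exists_nashEq_le hsm hid (fun s => ((hB s).2 _ subset_rfl (hB s).1).2)
      (isBestResponseAbove_map_of_mem_nashEq hγ hpf hb)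
  · have hsmG : IsSupermodularUtility fun i a => u i (Pi.map γ a) :=
      IsSupermodularUtility.comp_map hsm hdisj fun j _ _ => (hgc j).u_inf
    obtain ⟨b, hb, hxb⟩ := exists_le_nashEq hsmG (HasIncreasingDifferences.comp_map hid hγ)
      (fun a => ((hBG a).2 _ subset_rfl (hBG a).1).1)
      (isBestResponseBelow_map_of_mem_nashEq hgc hpf hsm hid hx)
    exact ⟨_, ⟨b, hb, rfl⟩, fun j => ((hgc j).le_u_l (x j)).trans (hγ j (hxb j))⟩

/-- Echenique-style correctness for principal filter abstractions:
with finitely disjunctive Galois insertions `(αᵢ, Sᵢ, Aᵢ, γᵢ)` that are principal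
filter Galois connections (`γᵢ(Aᵢ) = {c | γᵢ ⊥ ≤ c}`), a supermodular game
`Γ = ⟨Sᵢ, uᵢ⟩` whose best response has nonempty subcomplete-sublattice values, and
abstract game `Γ^G = ⟨Aᵢ, uᵢ∘γ⟩` likewise, we have `Eq(Γ) ⪯_EM γ^s(Eq(Γ^G))`. -/
theorem principal_filter_abstract_game_correctness {n : ℕ} {S A : Fin n → Type*}
    [∀ j, CompleteLattice (S j)] [∀ j, CompleteLattice (A j)]
    (α : ∀ j, S j → A j) (γ : ∀ j, A j → S j)
    (hgc : ∀ j, GaloisConnection (α j) (γ j))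
    (hgi : ∀ j, ∀ a : A j, α j (γ j a) = a)
    (hdisj : ∀ j, ∀ x y : A j, γ j (x ⊔ y) = γ j x ⊔ γ j y)
    (hpf : ∀ j, Set.range (γ j) = {c : S j | γ j ⊥ ≤ c})
    {N : Fin n → ℕ} (u : ∀ i, (∀ j, S j) → (Fin (N i) → ℝ))
    (hsm : ∀ i, ∀ s : ∀ j, S j, ∀ x y : S i,
      u i (Function.update s i x) + u i (Function.update s i y) ≤
        u i (Function.update s i (x ⊔ y)) + u i (Function.update s i (x ⊓ y)))
    (hid : ∀ i, ∀ x x' : S i, x ≤ x' → ∀ s t : ∀ j, S j, s ≤ t →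
      u i (Function.update s i x') - u i (Function.update s i x) ≤
        u i (Function.update t i x') - u i (Function.update t i x))
    (hB : ∀ s : ∀ j, S j, (bestResponse u s).Nonempty ∧
      ∀ Z ⊆ bestResponse u s, Z.Nonempty →
        sInf Z ∈ bestResponse u s ∧ sSup Z ∈ bestResponse u s)
    (hBG : ∀ a : ∀ j, A j,
      (bestResponse (fun i a => u i (fun j => γ j (a j))) a).Nonempty ∧
      ∀ Z ⊆ bestResponse (fun i a => u i (fun j => γ j (a j))) a, Z.Nonempty →
        sInf Z ∈ bestResponse (fun i a => u i (fun j => γ j (a j))) a ∧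
        sSup Z ∈ bestResponse (fun i a => u i (fun j => γ j (a j))) a) :
    EgliMilnerLE (nashEq u)
      ((fun b : ∀ j, A j => fun j => γ j (b j)) ''
        nashEq (fun i a => u i (fun j => γ j (a j)))) :=
  principal_filter_abstract_game_correctness_general α γ hgc hdisj hpf u hsm hid hB hBG
end
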